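/- (PoA_γ ≥ 2 + γ for the English Walrasian mechanism.) Let n = 2 agents and m = 2 items A and B, fix γ > 0 and 0 < ε < 1. Define unit-demand valuations v_1(S) = max_{j∈S} w^1_j with w^1_A = 2−ε, w^1_B = 2/(2+γ), and v_2(S) = max_{j∈S} w^2_j with w^2_A = 2/(2+γ), w^2_B = 2−ε. Define bids b_1(S) = 2(1+γ)/(2+γ) if B ∈ S else 0, and b_2(S) = 2(1+γ)/(2+γ) if A ∈ S else 0. Then for every English Walrasian mechanism with bid space equal to the GS valuations, the profile (b_1, b_2) is a pure Nash equilibrium for (v_1, v_2) in which each bid has exposure factor γ; the equilibrium allocation assigns B to agent 1 and A to agent 2, with welfare ∑_i v_i(X_i(b)) = 4/(2+γ), while OPT(v) = 4 − 2ε. -/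

import Mathlib

open Finset

/-- A valuation on `m` items: normalized at `∅`, monotone, nonnegative. -/
def IsValuation {m : ℕ} (v : Finset (Fin m) → ℝ) : Prop :=
  v ∅ = 0 ∧ (∀ S T : Finset (Fin m), S ⊆ T → v S ≤ v T) ∧ (∀ S, 0 ≤ v S)

/-- `S` is in the demand set of valuation `v` at prices `p`. -/
def InDemand {m : ℕ} (v : Finset (Fin m) → ℝ) (p : Fin m → ℝ) (S : Finset (Fin m)) : Prop :=
  ∀ T : Finset (Fin m), v T - ∑ j ∈ T, p j ≤ v S - ∑ j ∈ S, p j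

/-- Gross substitutes valuations. -/
def IsGS {m : ℕ} (v : Finset (Fin m) → ℝ) : Prop :=
  IsValuation v ∧
    ∀ p q : Fin m → ℝ, (∀ j, p j ≤ q j) →
      ∀ S : Finset (Fin m), InDemand v p S →
        ∃ T : Finset (Fin m), InDemand v q T ∧ ∀ j ∈ S, p j = q j → j ∈ T

/-- Additive valuations. -/
def IsAdditive {m : ℕ} (v : Finset (Fin m) → ℝ) : Prop :=
  ∃ w : Fin m → ℝ, (∀ j, 0 ≤ w j) ∧ ∀ S : Finset (Fin m), v S = ∑ j ∈ S, w j

/-- XOS valuations: a max over a nonempty finite family of nonnegative additive valuations. -/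
def IsXOS {m : ℕ} (v : Finset (Fin m) → ℝ) : Prop :=
  ∃ (k : ℕ) (w : Fin (k + 1) → Fin m → ℝ),
    (∀ i j, 0 ≤ w i j) ∧
    ∀ S : Finset (Fin m),
      v S = Finset.univ.sup' Finset.univ_nonempty (fun i => ∑ j ∈ S, w i j)

def GSvals (m : ℕ) : Set (Finset (Fin m) → ℝ) := {u | IsGS u}
def XOSvals (m : ℕ) : Set (Finset (Fin m) → ℝ) := {u | IsXOS u}

/-- The welfare `W^b(S)`: the maximum of `∑ i, b i (X i)` over allocations (pairwise disjoint
tuples of subsets) contained in `S`. -/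
noncomputable def W {n m : ℕ} (b : Fin n → Finset (Fin m) → ℝ) (S : Finset (Fin m)) : ℝ :=
  sSup {t : ℝ | ∃ X : Fin n → Finset (Fin m),
    (∀ i j : Fin n, i ≠ j → Disjoint (X i) (X j)) ∧ (∀ i, X i ⊆ S) ∧ t = ∑ i, b i (X i)}

/-- The welfare `W^{b₋ᵢ}(S)` with agent `i` omitted. -/
noncomputable def Wminus {n m : ℕ} (b : Fin n → Finset (Fin m) → ℝ) (i : Fin n)
    (S : Finset (Fin m)) : ℝ :=
  sSup {t : ℝ | ∃ X : Fin n → Finset (Fin m),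
    (∀ k l : Fin n, k ≠ l → Disjoint (X k) (X l)) ∧ (∀ k, X k ⊆ S) ∧
    t = ∑ k ∈ Finset.univ.erase i, b k (X k)}

/-- The welfare `W^b(x)` for a multiplicity vector `x : Fin m → ℕ`: maximum of `∑ i, b i (X i)`
over tuples of sets in which each item `j` is used at most `x j` times. -/
noncomputable def Wmult {n m : ℕ} (b : Fin n → Finset (Fin m) → ℝ) (x : Fin m → ℕ) : ℝ :=
  sSup {t : ℝ | ∃ X : Fin n → Finset (Fin m),
    (∀ j : Fin m, (Finset.univ.filter fun i => j ∈ X i).card ≤ x j) ∧ t = ∑ i, b i (X i)}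

/-- The optimal welfare for the true valuations. -/
noncomputable def OPT {n m : ℕ} (v : Fin n → Finset (Fin m) → ℝ) : ℝ := W v Finset.univ

/-- A mechanism: allocation and payment maps on bid profiles. -/
structure Mechanism (n m : ℕ) where
  alloc : (Fin n → Finset (Fin m) → ℝ) → Fin n → Finset (Fin m)
  pay : (Fin n → Finset (Fin m) → ℝ) → Fin n → ℝ

/-- A bid profile lies in the bid space `B`. -/
def InBidSpace {n m : ℕ} (B : Set (Finset (Fin m) → ℝ))
    (b : Fin n → Finset (Fin m) → ℝ) : Prop :=
  ∀ i, b i ∈ B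

/-- On bid profiles from `B`, the allocation is pairwise disjoint. -/
def AllocDisjoint {n m : ℕ} (M : Mechanism n m) (B : Set (Finset (Fin m) → ℝ)) : Prop :=
  ∀ b, InBidSpace B b → ∀ i j : Fin n, i ≠ j → Disjoint (M.alloc b i) (M.alloc b j)

/-- On bid profiles from `B`, payments are nonnegative. -/
def PayNonneg {n m : ℕ} (M : Mechanism n m) (B : Set (Finset (Fin m) → ℝ)) : Prop :=
  ∀ b, InBidSpace B b → ∀ i, 0 ≤ M.pay b i

/-- The utility of agent `i` with true valuation `v` under bid profile `b`. -/
noncomputable def util {n m : ℕ} (M : Mechanism n m) (v : Finset (Fin m) → ℝ) (i : Fin n)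
    (b : Fin n → Finset (Fin m) → ℝ) : ℝ :=
  v (M.alloc b i) - M.pay b i

/-- Declared welfare maximizer. -/
def IsDWM {n m : ℕ} (M : Mechanism n m) (B : Set (Finset (Fin m) → ℝ)) : Prop :=
  (∀ b, InBidSpace B b → ∑ i, b i (M.alloc b i) = W b Finset.univ) ∧
  (∀ b, InBidSpace B b → ∀ i, M.pay b i ≤ b i (M.alloc b i)) ∧
  (∀ b, InBidSpace B b → ∀ i : Fin n, ∃ b' : Fin n → Finset (Fin m) → ℝ,
    InBidSpace B b' ∧ b' i = b i ∧ M.alloc b' i = M.alloc b i ∧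
    M.pay b' i = b i (M.alloc b i))

/-- English Walrasian mechanism: welfare-maximizing allocation w.r.t. the bids, with
payments given by the minimum Walrasian prices `W^b(𝟙 + e_j) − W^b(𝟙)`. -/
def IsEnglish {n m : ℕ} (M : Mechanism n m) (B : Set (Finset (Fin m) → ℝ)) : Prop :=
  (∀ b, InBidSpace B b → ∑ i, b i (M.alloc b i) = W b Finset.univ) ∧
  (∀ b, InBidSpace B b → ∀ i, M.pay b i =
    ∑ j ∈ M.alloc b i,
      (Wmult b (fun k => if k = j then 2 else 1) - Wmult b (fun _ => 1)))

/-- VCG mechanism: welfare-maximizing allocation w.r.t. the bids, with externality payments. -/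
def IsVCG {n m : ℕ} (M : Mechanism n m) (B : Set (Finset (Fin m) → ℝ)) : Prop :=
  (∀ b, InBidSpace B b → ∑ i, b i (M.alloc b i) = W b Finset.univ) ∧
  (∀ b, InBidSpace B b → ∀ i, M.pay b i =
    Wminus b i Finset.univ - Wminus b i (Finset.univ \ M.alloc b i))

/-- Bid `bi` of agent `i` with true valuation `v` has exposure factor `γ`. -/
def HasExposureFactor {n m : ℕ} (M : Mechanism n m) (B : Set (Finset (Fin m) → ℝ))
    (v : Finset (Fin m) → ℝ) (i : Fin n) (bi : Finset (Fin m) → ℝ) (γ : ℝ) : Prop :=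
  ∀ b : Fin n → Finset (Fin m) → ℝ, InBidSpace B b → b i = bi →
    M.pay b i ≤ (1 + γ) * v (M.alloc b i)

/-- `b` is a pure Nash equilibrium for true valuations `v`. -/
noncomputable def IsNash {n m : ℕ} (M : Mechanism n m) (B : Set (Finset (Fin m) → ℝ))
    (v b : Fin n → Finset (Fin m) → ℝ) : Prop :=
  InBidSpace B b ∧
  ∀ i : Fin n, ∀ bi' ∈ B, util M (v i) i (Function.update b i bi') ≤ util M (v i) i b

/-- A finitely supported probability distribution. -/
structure FinDist (α : Type*) where
  supp : Finset α
  μ : α → ℝ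
  nonneg : ∀ a, 0 ≤ μ a
  sum_one : ∑ a ∈ supp, μ a = 1

/-- Expectation of `f` under a finitely supported distribution. -/
noncomputable def FinDist.exp {α : Type*} (D : FinDist α) (f : α → ℝ) : ℝ :=
  ∑ a ∈ D.supp, D.μ a * f a

/-- Bayes-Nash equilibrium: strategies map types in `V` to bids in `B`, and no unilateral
deviation (depending only on the agent's own type) improves expected utility. -/
noncomputable def IsBNE {n m : ℕ} (M : Mechanism n m) (V B : Set (Finset (Fin m) → ℝ))
    (D : FinDist (Fin n → Finset (Fin m) → ℝ))
    (s : Fin n → (Finset (Fin m) → ℝ) → Finset (Fin m) → ℝ) : Prop :=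
  (∀ i : Fin n, ∀ vi ∈ V, s i vi ∈ B) ∧
  ∀ i : Fin n, ∀ s' : (Finset (Fin m) → ℝ) → Finset (Fin m) → ℝ, (∀ vi ∈ V, s' vi ∈ B) →
    D.exp (fun v => util M (v i) i (Function.update (fun k => s k (v k)) i (s' (v i)))) ≤
    D.exp (fun v => util M (v i) i (fun k => s k (v k)))

/-- Strategy `si` of agent `i` has exposure factor `γ` under distribution `D`. -/
noncomputable def BayesExposure {n m : ℕ} (M : Mechanism n m)
    (V B : Set (Finset (Fin m) → ℝ)) (D : FinDist (Fin n → Finset (Fin m) → ℝ)) (i : Fin n)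
    (si : (Finset (Fin m) → ℝ) → Finset (Fin m) → ℝ) (γ : ℝ) : Prop :=
  ∀ c : (Finset (Fin m) → ℝ) → Fin n → Finset (Fin m) → ℝ,
    (∀ vi ∈ V, InBidSpace B (c vi) ∧ c vi i = si vi) →
    D.exp (fun v => M.pay (c (v i)) i) ≤
      (1 + γ) * D.exp (fun v => (v i) (M.alloc (c (v i)) i))

/-- A unit-demand valuation with weight vector `w`. -/
noncomputable def unitDemand {m : ℕ} (w : Fin m → ℝ) : Finset (Fin m) → ℝ :=
  fun S => if h : S.Nonempty then S.sup' h w else 0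

/-- Bid of agent 1: 2(1+γ)/(2+γ) on sets containing item B (index 1), else 0. -/
noncomputable def gB1 (γ : ℝ) : Finset (Fin 2) → ℝ :=
  fun S => if (1 : Fin 2) ∈ S then 2 * (1 + γ) / (2 + γ) else 0

/-- Bid of agent 2: 2(1+γ)/(2+γ) on sets containing item A (index 0), else 0. -/
noncomputable def gB2 (γ : ℝ) : Finset (Fin 2) → ℝ :=
  fun S => if (0 : Fin 2) ∈ S then 2 * (1 + γ) / (2 + γ) else 0


/-!
Write `c = 2(1+γ)/(2+γ)` and `d = 2/(2+γ)`, so that `c + d = 2` and `c = (1+γ) d`. With two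
agents, deleting item `k` from one agent's set in a tuple that may use `k` twice leaves an
allocation; hence the minimum Walrasian price of `k` is at most what that agent's bid loses when
`k` is taken away. Under the cross bids each item is ignored by one agent, so every price vanishes
and each agent gets the item it values at `d` for free, while a bid never pays more than `c` for
the item it names: exposure `γ`. An agent that deviates and wins its favourite item takes it from
a bidder of `c`; since that bidder could be handed a second copy, the price of the item is at least
`c`, which leaves the deviator at most `2 - ε - c ≤ d`.
-/

noncomputable def minWalrasPrice {n m : ℕ} (b : Fin n → Finset (Fin m) → ℝ) (j : Fin m) : ℝ :=
  Wmult b (fun k => if k = j then 2 else 1) - Wmult b (fun _ => 1)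

def singleItemBid {m : ℕ} (j : Fin m) (c : ℝ) : Finset (Fin m) → ℝ :=
  fun S => if j ∈ S then c else 0

lemma sum_apply_update {ι α : Type*} [Fintype ι] [DecidableEq ι] (f : ι → α → ℝ) (g : ι → α)
    (i : ι) (v : α) :
    ∑ k, f k (Function.update g i v k) = ∑ k, f k (g k) - f i (g i) + f i v := by
  simp_rw [Function.apply_update f g i v]
  rw [sum_update_of_mem (mem_univ i), sdiff_singleton_eq_erase,
    ← add_sum_erase _ (fun k => f k (g k)) (mem_univ i)]
  ring

lemma sum_le_sum_of_pos_subset {ι : Type*} [DecidableEq ι] {f : ι → ℝ} {T : Finset ι}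
    (hpos : ∀ j, 0 < f j → j ∈ T) (hT : ∀ j ∈ T, 0 ≤ f j) (U : Finset ι) :
    ∑ j ∈ U, f j ≤ ∑ j ∈ T, f j :=
  calc ∑ j ∈ U, f j ≤ ∑ j ∈ U.filter (· ∈ T), f j := by
        rw [← sum_filter_add_sum_filter_not U (· ∈ T)]
        exact add_le_of_nonpos_right
          (sum_nonpos fun j hj => not_lt.1 fun h => (mem_filter.1 hj).2 (hpos j h))
    _ ≤ ∑ j ∈ T, f j :=
        sum_le_sum_of_subset_of_nonneg (fun j hj => (mem_filter.1 hj).2) fun j hj _ => hT j hj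

section Welfare

variable {n m : ℕ} (b : Fin n → Finset (Fin m) → ℝ)

lemma le_W {S : Finset (Fin m)} {X : Fin n → Finset (Fin m)}
    (hX : ∀ i j : Fin n, i ≠ j → Disjoint (X i) (X j)) (hXS : ∀ i, X i ⊆ S) :
    ∑ i, b i (X i) ≤ W b S := by
  refine le_csSup (Set.Finite.bddAbove ?_) ⟨X, hX, hXS, rfl⟩
  refine (Set.finite_range fun X : Fin n → Finset (Fin m) => ∑ i, b i (X i)).subset ?_
  rintro _ ⟨X, -, -, rfl⟩
  exact ⟨X, rfl⟩

lemma W_le {S : Finset (Fin m)} {a : ℝ}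
    (h : ∀ X : Fin n → Finset (Fin m), (∀ i j : Fin n, i ≠ j → Disjoint (X i) (X j)) →
      (∀ i, X i ⊆ S) → ∑ i, b i (X i) ≤ a) :
    W b S ≤ a := by
  refine csSup_le
    ⟨_, fun _ => ∅, fun _ _ _ => disjoint_empty_left _, fun _ => empty_subset _, rfl⟩ ?_
  rintro _ ⟨X, hX, hXS, rfl⟩
  exact h X hX hXS

lemma le_Wmult {x : Fin m → ℕ} {X : Fin n → Finset (Fin m)}
    (hX : ∀ j, (univ.filter fun i => j ∈ X i).card ≤ x j) :
    ∑ i, b i (X i) ≤ Wmult b x := by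
  refine le_csSup (Set.Finite.bddAbove ?_) ⟨X, hX, rfl⟩
  refine (Set.finite_range fun X : Fin n → Finset (Fin m) => ∑ i, b i (X i)).subset ?_
  rintro _ ⟨X, -, rfl⟩
  exact ⟨X, rfl⟩

lemma Wmult_le {x : Fin m → ℕ} {a : ℝ}
    (h : ∀ X : Fin n → Finset (Fin m), (∀ j, (univ.filter fun i => j ∈ X i).card ≤ x j) →
      ∑ i, b i (X i) ≤ a) :
    Wmult b x ≤ a := by
  refine csSup_le ⟨_, fun _ => ∅, fun j => by simp, rfl⟩ ?_
  rintro _ ⟨X, hX, rfl⟩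
  exact h X hX

lemma Wmult_mono {x y : Fin m → ℕ} (hxy : x ≤ y) : Wmult b x ≤ Wmult b y :=
  Wmult_le b fun _ hX => le_Wmult b fun j => (hX j).trans (hxy j)

lemma forall_card_filter_mem_le_one_iff {X : Fin n → Finset (Fin m)} :
    (∀ j, (univ.filter fun i => j ∈ X i).card ≤ 1) ↔
      ∀ i i' : Fin n, i ≠ i' → Disjoint (X i) (X i') := by
  simp only [card_le_one, mem_filter, mem_univ, true_and]
  constructor
  · exact fun h i i' hii' => disjoint_left.2 fun j hi hi' => hii' (h j i hi i' hi')
  · exact fun h j i hi i' hi' => by_contra fun hii' => disjoint_left.1 (h i i' hii') hi hi'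

lemma Wmult_one_le_W : Wmult b (fun _ => 1) ≤ W b univ :=
  Wmult_le b fun _ hX => le_W b (forall_card_filter_mem_le_one_iff.1 hX) fun _ => subset_univ _

lemma minWalrasPrice_nonneg (j : Fin m) : 0 ≤ minWalrasPrice b j :=
  sub_nonneg.2 (Wmult_mono b fun k => by dsimp only; split_ifs <;> omega)

/-- Giving agent `a` the extra copy of `k` on top of a welfare-maximizing allocation is feasible
when item `k` may be used twice. -/
lemma sub_le_minWalrasPrice {X : Fin n → Finset (Fin m)}
    (hX : ∀ i i' : Fin n, i ≠ i' → Disjoint (X i) (X i'))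
    (hopt : Wmult b (fun _ => 1) ≤ ∑ i, b i (X i)) (a : Fin n) (k : Fin m) :
    b a {k} - b a (X a) ≤ minWalrasPrice b k := by
  have hfeas : ∀ j, (univ.filter fun i => j ∈ Function.update X a {k} i).card ≤
      if j = k then 2 else 1 := by
    intro j
    have hone := forall_card_filter_mem_le_one_iff.2 hX j
    split_ifs with hjk
    · refine (card_le_card fun i hi => ?_).trans
        ((card_insert_le a (univ.filter fun i => j ∈ X i)).trans (by omega))
      simp only [mem_filter, mem_univ, true_and, mem_insert, Function.update_apply] at hi ⊢
      split_ifs at hi with hia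
      · exact Or.inl hia
      · exact Or.inr hi
    · refine (card_le_card fun i hi => ?_).trans hone
      simp only [mem_filter, mem_univ, true_and, Function.update_apply] at hi ⊢
      split_ifs at hi
      · exact absurd (mem_singleton.1 hi) hjk
      · exact hi
  have hle := le_Wmult b hfeas
  rw [sum_apply_update] at hle
  rw [minWalrasPrice]
  linarith

end Welfare

section TwoAgents

variable {m : ℕ}

lemma card_filter_mem_le_one_of_notMem {Z : Fin 2 → Finset (Fin m)} {i : Fin 2} {j : Fin m}
    (h : j ∉ Z i) : (univ.filter fun a => j ∈ Z a).card ≤ 1 :=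
  calc (univ.filter fun a => j ∈ Z a).card ≤ (univ.erase i).card :=
        card_le_card fun a ha => mem_erase.2
          ⟨by rintro rfl; exact h (mem_filter.1 ha).2, mem_univ a⟩
    _ = 1 := by simp

lemma minWalrasPrice_le_of_le_erase_add {b : Fin 2 → Finset (Fin m) → ℝ} {i : Fin 2}
    {k : Fin m} {c : ℝ} (hb : ∀ S, b i S ≤ b i (S.erase k) + c) :
    minWalrasPrice b k ≤ c := by
  rw [minWalrasPrice, sub_le_iff_le_add']
  refine Wmult_le b fun Z hZ => ?_
  set Z' := Function.update Z i ((Z i).erase k)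
  have hZ'Z : ∀ a, Z' a ⊆ Z a := by
    intro a
    rcases eq_or_ne a i with rfl | hai
    · simpa [Z'] using erase_subset k (Z a)
    · simp [Z', hai]
  have hZ' : ∀ j, (univ.filter fun a => j ∈ Z' a).card ≤ 1 := by
    intro j
    rcases eq_or_ne j k with rfl | hjk
    · exact card_filter_mem_le_one_of_notMem (i := i) (by simp [Z'])
    · refine (card_le_card fun a ha => ?_).trans ((hZ j).trans_eq (if_neg hjk))
      simp only [mem_filter, mem_univ, true_and] at ha ⊢
      exact hZ'Z a ha
  have hsum := sum_apply_update b Z i ((Z i).erase k)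
  linarith [le_Wmult b hZ', hb (Z i)]

end TwoAgents

section SingleItemBid

variable {m : ℕ} {j : Fin m} {c : ℝ} {S : Finset (Fin m)}

lemma singleItemBid_of_mem (h : j ∈ S) : singleItemBid j c S = c := if_pos h

lemma singleItemBid_of_notMem (h : j ∉ S) : singleItemBid j c S = 0 := if_neg h

lemma singleItemBid_le (hc : 0 ≤ c) : singleItemBid j c S ≤ c := by
  unfold singleItemBid
  split_ifs <;> simp [hc]

lemma singleItemBid_le_erase_add (hc : 0 ≤ c) (k : Fin m) :
    singleItemBid j c S ≤ singleItemBid j c (S.erase k) + if k = j then c else 0 := by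
  unfold singleItemBid
  split_ifs <;> simp_all

lemma IsAdditive.isGS {v : Finset (Fin m) → ℝ} (hv : IsAdditive v) : IsGS v := by
  obtain ⟨w, hw, hv⟩ := hv
  refine ⟨⟨by simp [hv], fun S T h => ?_, fun S => ?_⟩, fun p q hpq S hS => ?_⟩
  · rw [hv, hv]
    exact sum_le_sum_of_subset_of_nonneg h fun j _ _ => hw j
  · rw [hv]
    exact sum_nonneg fun j _ => hw j
  have hSp : ∀ j ∈ S, p j ≤ w j := fun j hj => by
    have := hS (S.erase j)
    rw [hv, hv, sum_erase_eq_sub hj, sum_erase_eq_sub hj] at this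
    linarith
  refine ⟨univ.filter fun j => q j < w j ∨ j ∈ S ∧ p j = q j, fun U => ?_,
    fun j hj hpqj => by simp [hj, hpqj]⟩
  rw [hv, hv, ← sum_sub_distrib, ← sum_sub_distrib]
  refine sum_le_sum_of_pos_subset (fun j hj => mem_filter.2 ⟨mem_univ j, Or.inl (by linarith)⟩)
    (fun j hj => ?_) U
  rcases (mem_filter.1 hj).2 with h | ⟨hjS, hpqj⟩
  · linarith
  · linarith [hSp j hjS]

lemma singleItemBid_isGS (hc : 0 ≤ c) : IsGS (singleItemBid j c) :=
  IsAdditive.isGS ⟨fun k => if k = j then c else 0, fun k => by by_cases h : k = j <;> simp [h, hc],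
    fun S => by simp [singleItemBid]⟩

end SingleItemBid

section UnitDemand

variable {m : ℕ} {w : Fin m → ℝ} {S : Finset (Fin m)}

lemma unitDemand_singleton (j : Fin m) : unitDemand w {j} = w j := by
  simp [unitDemand]

lemma le_unitDemand {j : Fin m} (hj : j ∈ S) : w j ≤ unitDemand w S := by
  rw [unitDemand, dif_pos ⟨j, hj⟩]
  exact le_sup' w hj

lemma unitDemand_le {a : ℝ} (ha : 0 ≤ a) (h : ∀ j ∈ S, w j ≤ a) : unitDemand w S ≤ a := by
  rw [unitDemand]
  split_ifs
  · exact sup'_le _ _ h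
  · exact ha

lemma unitDemand_nonneg (hw : ∀ j, 0 ≤ w j) : 0 ≤ unitDemand w S := by
  rcases S.eq_empty_or_nonempty with rfl | ⟨j, hj⟩
  · simp [unitDemand]
  · exact (hw j).trans (le_unitDemand hj)

end UnitDemand

namespace IsEnglish

section

variable {n m : ℕ} {M : Mechanism n m} {B : Set (Finset (Fin m) → ℝ)}
  {b : Fin n → Finset (Fin m) → ℝ}

lemma pay_eq (hM : IsEnglish M B) (hb : InBidSpace B b) (i : Fin n) :
    M.pay b i = ∑ j ∈ M.alloc b i, minWalrasPrice b j :=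
  hM.2 b hb i

lemma pay_nonneg (hM : IsEnglish M B) (hb : InBidSpace B b) (i : Fin n) : 0 ≤ M.pay b i := by
  rw [hM.pay_eq hb]
  exact sum_nonneg fun j _ => minWalrasPrice_nonneg b j

lemma le_pay_of_mem (hM : IsEnglish M B) (hdisj : AllocDisjoint M B) (hb : InBidSpace B b)
    {i i' : Fin n} (hii' : i ≠ i') {k : Fin m} {c : ℝ} (hbi' : b i' = singleItemBid k c)
    (hk : k ∈ M.alloc b i) : c ≤ M.pay b i := by
  have hX := hdisj b hb
  have hopt : Wmult b (fun _ => 1) ≤ ∑ a, b a (M.alloc b a) :=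
    (hM.1 b hb).symm ▸ Wmult_one_le_W b
  have hprice := sub_le_minWalrasPrice b hX hopt i' k
  rw [hbi', singleItemBid_of_mem (mem_singleton_self k),
    singleItemBid_of_notMem (disjoint_left.1 (hX i i' hii') hk), sub_zero] at hprice
  rw [hM.pay_eq hb]
  exact hprice.trans (single_le_sum (fun j _ => minWalrasPrice_nonneg b j) hk)

lemma util_le (hM : IsEnglish M B) (hdisj : AllocDisjoint M B) (hb : InBidSpace B b)
    {i i' : Fin n} (hii' : i ≠ i') {k : Fin m} {c d : ℝ} (hbi' : b i' = singleItemBid k c)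
    {v : Finset (Fin m) → ℝ} (hv : ∀ S, v S ≤ c + d) (hvk : ∀ S, k ∉ S → v S ≤ d) :
    util M v i b ≤ d := by
  rw [util]
  by_cases hk : k ∈ M.alloc b i
  · linarith [hv (M.alloc b i), hM.le_pay_of_mem hdisj hb hii' hbi' hk]
  · linarith [hvk _ hk, hM.pay_nonneg hb i]

lemma mem_alloc_of_singleItemBid (hM : IsEnglish M B) {σ : Fin n → Fin m}
    (hσ : Function.Injective σ) {c : ℝ} (hc : 0 < c)
    (hb : InBidSpace B fun i => singleItemBid (σ i) c) (i : Fin n) :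
    σ i ∈ M.alloc (fun i => singleItemBid (σ i) c) i := by
  set b : Fin n → Finset (Fin m) → ℝ := fun i => singleItemBid (σ i) c
  by_contra hi
  have hfull : ∑ a, b a {σ a} ≤ ∑ a, b a (M.alloc b a) :=
    (hM.1 b hb).symm ▸ le_W b (X := fun a => {σ a})
      (fun a a' h => disjoint_singleton.2 (hσ.ne h)) fun _ => subset_univ _
  have hlt : ∑ a, b a (M.alloc b a) < ∑ a, b a {σ a} := by
    refine sum_lt_sum (fun a _ => ?_) ⟨i, mem_univ i, ?_⟩
    · simp only [b, singleItemBid_of_mem (mem_singleton_self _)]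
      exact singleItemBid_le hc.le
    · simpa only [b, singleItemBid_of_mem (mem_singleton_self _), singleItemBid_of_notMem hi]
  exact hlt.not_ge hfull

end

section TwoAgents

variable {m : ℕ} {M : Mechanism 2 m} {B : Set (Finset (Fin m) → ℝ)}

lemma pay_le_of_singleItemBid (hM : IsEnglish M B) {b : Fin 2 → Finset (Fin m) → ℝ}
    (hb : InBidSpace B b) {i : Fin 2} {j : Fin m} {c : ℝ} (hc : 0 ≤ c)
    (hbi : b i = singleItemBid j c) :
    M.pay b i ≤ if j ∈ M.alloc b i then c else 0 := by
  rw [hM.pay_eq hb, ← sum_ite_eq' (M.alloc b i) j fun _ => c]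
  exact sum_le_sum fun k _ =>
    minWalrasPrice_le_of_le_erase_add (i := i) (hbi ▸ fun S => singleItemBid_le_erase_add hc k)

lemma hasExposureFactor_singleItemBid (hM : IsEnglish M B) {v : Finset (Fin m) → ℝ} {i : Fin 2}
    {j : Fin m} {c γ : ℝ} (hc : 0 ≤ c) (hγ : 0 ≤ 1 + γ) (hv : ∀ S, 0 ≤ v S)
    (hvj : ∀ S, j ∈ S → c ≤ (1 + γ) * v S) :
    HasExposureFactor M B v i (singleItemBid j c) γ := by
  intro b hb hbi
  refine (hM.pay_le_of_singleItemBid hb hc hbi).trans ?_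
  split_ifs with hj
  · exact hvj _ hj
  · exact mul_nonneg hγ (hv _)

end TwoAgents

end IsEnglish

section CrossBids

lemma fin_two_rev_ne_self (i : Fin 2) : i.rev ≠ i := by
  fin_cases i <;> decide

lemma fin_two_eq_rev_of_ne {i j : Fin 2} (h : j ≠ i) : j = i.rev := by
  fin_cases i <;> fin_cases j <;> simp_all

def crossBids (c : ℝ) : Fin 2 → Finset (Fin 2) → ℝ := fun i => singleItemBid i.rev c

noncomputable def diagUnitDemand (a d : ℝ) : Fin 2 → Finset (Fin 2) → ℝ :=
  fun i => unitDemand fun j => if j = i then a else d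

variable {M : Mechanism 2 2} {a c d γ : ℝ}

lemma crossBids_mem (hc : 0 ≤ c) : InBidSpace (GSvals 2) (crossBids c) :=
  fun _ => singleItemBid_isGS hc

lemma sum_diagUnitDemand_rev : ∑ i, diagUnitDemand a d i {i.rev} = 2 * d := by
  simp [diagUnitDemand, unitDemand_singleton, fin_two_rev_ne_self]

lemma OPT_diagUnitDemand (hd : 0 ≤ d) (hda : d ≤ a) : OPT (diagUnitDemand a d) = 2 * a := by
  have hw : ∀ i S, diagUnitDemand a d i S ≤ a := fun i S =>
    unitDemand_le (hd.trans hda) fun j _ => by split_ifs <;> linarith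
  refine le_antisymm (W_le _ fun X _ _ => ?_) ?_
  · rw [Fin.sum_univ_two]
    linarith [hw 0 (X 0), hw 1 (X 1)]
  · have := le_W (diagUnitDemand a d) (X := fun i => {i})
      (fun i j h => disjoint_singleton.2 h) fun _ => subset_univ _
    simp only [diagUnitDemand, unitDemand_singleton, if_true, sum_const, card_univ,
      Fintype.card_fin, nsmul_eq_mul, Nat.cast_ofNat] at this
    exact this

namespace IsEnglish

lemma alloc_crossBids (hM : IsEnglish M (GSvals 2)) (hdisj : AllocDisjoint M (GSvals 2))
    (hc : 0 < c) (i : Fin 2) : M.alloc (crossBids c) i = {i.rev} := by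
  have hmem := hM.mem_alloc_of_singleItemBid Fin.rev_injective hc (crossBids_mem hc.le)
  refine eq_singleton_iff_unique_mem.2 ⟨hmem i, fun j hj => by_contra fun hji => ?_⟩
  obtain rfl : j = i := by simpa using fin_two_eq_rev_of_ne hji
  have hrev : j ∈ M.alloc (crossBids c) j.rev := by
    have := hmem j.rev
    rwa [Fin.rev_rev] at this
  exact disjoint_left.1 (hdisj _ (crossBids_mem hc.le) j j.rev (fin_two_rev_ne_self j).symm) hj hrev

lemma pay_crossBids_nonpos (hM : IsEnglish M (GSvals 2)) (hc : 0 ≤ c) (i : Fin 2) :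
    M.pay (crossBids c) i ≤ 0 := by
  rw [hM.pay_eq (crossBids_mem hc) i]
  refine sum_nonpos fun j _ => minWalrasPrice_le_of_le_erase_add (i := j) fun S => ?_
  have := singleItemBid_le_erase_add (j := j.rev) (S := S) hc j
  rwa [if_neg (fin_two_rev_ne_self j).symm] at this

lemma isNash_crossBids (hM : IsEnglish M (GSvals 2)) (hdisj : AllocDisjoint M (GSvals 2))
    (hc : 0 < c) (hd : 0 ≤ d) (hacd : a ≤ c + d) :
    IsNash M (GSvals 2) (diagUnitDemand a d) (crossBids c) := by
  refine ⟨crossBids_mem hc.le, fun i bi hbi => ?_⟩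
  have hne : i ≠ i.rev := (fin_two_rev_ne_self i).symm
  have hb : InBidSpace (GSvals 2) (Function.update (crossBids c) i bi) := by
    intro k
    rcases eq_or_ne k i with rfl | hki
    · simpa using hbi
    · simpa [hki] using crossBids_mem hc.le k
  have hother : Function.update (crossBids c) i bi i.rev = singleItemBid i c := by
    simp [Function.update_of_ne hne.symm, crossBids]
  calc util M (diagUnitDemand a d i) i (Function.update (crossBids c) i bi) ≤ d := by
        refine hM.util_le hdisj hb hne hother (fun S => ?_) fun S hS => ?_
        · exact unitDemand_le (by linarith) fun j _ => by split_ifs <;> linarith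
        · exact unitDemand_le hd fun j hj => by rw [if_neg (ne_of_mem_of_not_mem hj hS)]
    _ ≤ util M (diagUnitDemand a d i) i (crossBids c) := by
        rw [util, hM.alloc_crossBids hdisj hc, diagUnitDemand, unitDemand_singleton,
          if_neg (fin_two_rev_ne_self i)]
        linarith [hM.pay_crossBids_nonpos hc.le i]

lemma hasExposureFactor_crossBids (hM : IsEnglish M (GSvals 2)) (hd : 0 ≤ d) (ha : 0 ≤ a)
    (hγ : 0 ≤ 1 + γ) (hc : c = (1 + γ) * d) (i : Fin 2) :
    HasExposureFactor M (GSvals 2) (diagUnitDemand a d i) i (crossBids c i) γ := by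
  refine hM.hasExposureFactor_singleItemBid (hc ▸ mul_nonneg hγ hd) hγ
    (fun S => unitDemand_nonneg fun j => by split_ifs <;> assumption) fun S hS => ?_
  rw [hc]
  refine mul_le_mul_of_nonneg_left ?_ hγ
  have := le_unitDemand (w := fun j => if j = i then a else d) hS
  rwa [if_neg (fin_two_rev_ne_self i)] at this

end IsEnglish

end CrossBids

/-- PoA_γ ≥ 2 + γ for the English Walrasian mechanism: with unit-demand
valuations w¹ = (2−ε, 2/(2+γ)), w² = (2/(2+γ), 2−ε) (item A is index 0, item B index 1)
and the bids gB1 γ, gB2 γ, the bid profile is a pure Nash equilibrium of every English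
Walrasian mechanism on the GS bid space in which each bid has exposure factor γ; the
allocation gives B to agent 1 and A to agent 2, with welfare 4/(2+γ), while OPT = 4 − 2ε. -/
theorem stmt16 (γ : ℝ) (hγ : 0 < γ) (ε : ℝ) (hε : 0 < ε) (hε1 : ε < 1) :
    ∀ M : Mechanism 2 2,
      AllocDisjoint M (GSvals 2) → PayNonneg M (GSvals 2) → IsEnglish M (GSvals 2) →
        IsNash M (GSvals 2)
          ![unitDemand ![2 - ε, 2 / (2 + γ)], unitDemand ![2 / (2 + γ), 2 - ε]]
          ![gB1 γ, gB2 γ] ∧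
        (∀ i : Fin 2,
          HasExposureFactor M (GSvals 2)
            (![unitDemand ![2 - ε, 2 / (2 + γ)], unitDemand ![2 / (2 + γ), 2 - ε]] i) i
            (![gB1 γ, gB2 γ] i) γ) ∧
        M.alloc ![gB1 γ, gB2 γ] 0 = {1} ∧ M.alloc ![gB1 γ, gB2 γ] 1 = {0} ∧
        (∑ i, ![unitDemand ![2 - ε, 2 / (2 + γ)], unitDemand ![2 / (2 + γ), 2 - ε]] i
            (M.alloc ![gB1 γ, gB2 γ] i)) = 4 / (2 + γ) ∧
        OPT ![unitDemand ![2 - ε, 2 / (2 + γ)], unitDemand ![2 / (2 + γ), 2 - ε]] =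
          4 - 2 * ε := by
  intro M hdisj _ hM
  have h2γ : 0 < 2 + γ := by linarith
  have hc : 2 * (1 + γ) / (2 + γ) = (1 + γ) * (2 / (2 + γ)) := by ring
  have hcd : 2 * (1 + γ) / (2 + γ) + 2 / (2 + γ) = 2 := by field_simp; ring
  have hd1 : 2 / (2 + γ) < 1 := (div_lt_one h2γ).2 (by linarith)
  set c := 2 * (1 + γ) / (2 + γ)
  set d := 2 / (2 + γ)
  have hd : 0 < d := by positivity
  have hbids : ![gB1 γ, gB2 γ] = crossBids c := by
    ext i : 1
    fin_cases i <;> rfl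
  have hvals : ![unitDemand ![2 - ε, d], unitDemand ![d, 2 - ε]] = diagUnitDemand (2 - ε) d := by
    ext i : 1
    fin_cases i <;> refine congrArg unitDemand (funext fun j => ?_) <;> fin_cases j <;> simp
  rw [hbids, hvals]
  have halloc := hM.alloc_crossBids hdisj (by positivity : 0 < c)
  refine ⟨hM.isNash_crossBids hdisj (by positivity) hd.le (by linarith),
    hM.hasExposureFactor_crossBids hd.le (by linarith) (by linarith) hc, halloc 0, halloc 1,
    ?_, ?_⟩
  · rw [Fintype.sum_congr _ _ fun i => congrArg _ (halloc i), sum_diagUnitDemand_rev]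
    ring
  · rw [OPT_diagUnitDemand hd.le (by linarith)]
    ring
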